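/- For m > 3 odd and gcd(i,m)=1, the function F'(x) = x^{2^i+1} + (x^{2^i}+x)·tr(x^{2^i+1}+x) on F_{2^m} is an almost bent function (its Walsh values λ_{F'}(a,b) for b≠0 all lie in {0, ±2^{(m+1)/2}}), and F' is EA-inequivalent to every power function. -/

import Mathlib

open scoped BigOperators

/-- The absolute trace of `𝔽_{2^m}` over `𝔽₂`. -/
noncomputable def tr (m : ℕ) (x : GaloisField 2 m) : ZMod 2 :=
  Algebra.trace (ZMod 2) (GaloisField 2 m) x

/-- The function `F'(x) = x^{2^i+1} + (x^{2^i} + x)·tr(x^{2^i+1} + x)`. -/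
noncomputable def Fab (m i : ℕ) (x : GaloisField 2 m) : GaloisField 2 m :=
  x ^ (2 ^ i + 1) + (x ^ (2 ^ i) + x) *
    algebraMap (ZMod 2) (GaloisField 2 m) (tr m (x ^ (2 ^ i + 1) + x))

/-- The Walsh value `λ_F(a,b) = Σ_x (-1)^{tr(b·F(x)) + tr(a·x)}`. -/
noncomputable def walsh (m : ℕ) (F : GaloisField 2 m → GaloisField 2 m)
    (a b : GaloisField 2 m) : ℤ :=
  ∑ᶠ x : GaloisField 2 m, (-1 : ℤ) ^ (tr m (b * F x) + tr m (a * x)).val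

/-!
Write `q(x) = tr(x^{2^i+1} + x)`. The map `σ(x) = x + q(x)` is an involution preserving `q`, and
`F'(σ x) = x^{2^i+1} + q(x)`. Reindexing the Walsh sum of `F'` along `σ` turns it into the Walsh
sum of the Gold function `x^{2^i+1}` at `(a + ε, b + ε)` with `ε = tr(a + b)`, or into a sum of a
nontrivial character when `b + ε = 0`. The square of a Gold Walsh sum is `2^m` times a character
sum over the kernel `{0, u₀}` of the linearised polynomial `b u + b^{2^i} u^{2^{2i}}`, hence it is
`0` or `2^{m+1}`.

For EA-inequivalence compare algebraic degrees of the components `tr(β F')`. The component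
`β = 1` is quadratic. For `β ∉ {0, 1}` the component is `tr(β x^{2^i+1}) + tr(s x) q(x)` with
`s = β^{2^k} + β ≠ 0` (where `m ∣ i + k`), and an explicit nonvanishing third derivative shows
that it is not quadratic. If `F' = A₁ ∘ (·)^d ∘ (A₂ + c₂) + affine`, exactly one nonzero component
`tr(γ y^d)` would therefore be quadratic; since the scalings `y ↦ w y` permute these components,
`w^d = 1` for all `w ≠ 0`. Then `F'` is affine off a single point, so its Walsh value at `b = 1`
has absolute value at least `2^m - 2`, which is impossible for an almost bent function.
-/

open Finset

namespace GoldCCZ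

noncomputable instance (m : ℕ) : Fintype (GaloisField 2 m) := Fintype.ofFinite _

lemma zmod_two_eq_zero_or_one (t : ZMod 2) : t = 0 ∨ t = 1 := by
  revert t; decide

section Sign

def sgn (t : ZMod 2) : ℤ := (-1) ^ t.val

@[simp] lemma sgn_zero : sgn 0 = 1 := rfl

@[simp] lemma sgn_one : sgn 1 = -1 := rfl

lemma sgn_add (s t : ZMod 2) : sgn (s + t) = sgn s * sgn t := by
  revert s t; decide

lemma sgn_eq_one_or_neg_one (t : ZMod 2) : sgn t = 1 ∨ sgn t = -1 := by
  revert t; decide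

variable {G : Type*} [AddCommGroup G] [Fintype G]

lemma sum_sgn_eq_zero (φ : G →+ ZMod 2) {x₀ : G} (hx₀ : φ x₀ = 1) : ∑ x, sgn (φ x) = 0 := by
  have hshift : ∑ x, sgn (φ (x + x₀)) = ∑ x, sgn (φ x) :=
    Fintype.sum_equiv (Equiv.addRight x₀) _ _ fun _ => rfl
  simp only [map_add, hx₀, sgn_add, sgn_one, mul_neg_one, Finset.sum_neg_distrib] at hshift
  linarith

lemma sum_sgn_mul_self (f : G → ZMod 2) :
    (∑ x, sgn (f x)) * ∑ x, sgn (f x) = ∑ u, ∑ x, sgn (f (x + u) + f x) := by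
  calc (∑ x, sgn (f x)) * ∑ y, sgn (f y) = ∑ x, ∑ u, sgn (f x) * sgn (f (x + u)) := by
        rw [Finset.sum_mul_sum]
        exact Finset.sum_congr rfl fun x _ =>
          (Fintype.sum_equiv (Equiv.addLeft x) _ _ fun _ => rfl).symm
    _ = ∑ u, ∑ x, sgn (f (x + u) + f x) := by
        rw [Finset.sum_comm]
        simp only [sgn_add, mul_comm]

end Sign

section ThirdDerivative

variable {G : Type*} [AddCommGroup G]

/-- `deriv3 f a b c` is the third derivative `D_a D_b D_c f`; all of them vanish exactly when `f`
has algebraic degree at most `2`. -/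
def deriv3 (f : G → ZMod 2) (a b c x : G) : ZMod 2 :=
  f (x + a + b + c) + f (x + a + b) + f (x + a + c) + f (x + b + c) +
    f (x + a) + f (x + b) + f (x + c) + f x

def DegreeLeTwo (f : G → ZMod 2) : Prop :=
  ∀ a b c x, deriv3 f a b c x = 0

lemma deriv3_add (f g : G → ZMod 2) (a b c x : G) :
    deriv3 (fun z => f z + g z) a b c x = deriv3 f a b c x + deriv3 g a b c x := by
  simp only [deriv3]
  ring

lemma degreeLeTwo_of_quadratic {f : G → ZMod 2} (B : G → G → ZMod 2)
    (hf : ∀ u v, f (u + v) = f u + B u v + f v) (hB : ∀ u v w, B (u + v) w = B u w + B v w) :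
    DegreeLeTwo f := by
  intro a b c x
  simp only [deriv3, hf, hB]
  ring_nf
  reduce_mod_char

lemma deriv3_mul_of_quadratic (l q : G → ZMod 2) (B : G → G → ZMod 2)
    (hl : ∀ u v, l (u + v) = l u + l v) (hq : ∀ u v, q (u + v) = q u + B u v + q v)
    (hB : ∀ u v w, B (u + v) w = B u w + B v w) (a b c x : G) :
    deriv3 (fun z => l z * q z) a b c x = l a * B b c + l b * B a c + l c * B a b := by
  simp only [deriv3, hl, hq, hB]
  ring_nf
  reduce_mod_char

lemma degreeLeTwo_add_affine_iff {f : G → ZMod 2} (l : G →+ ZMod 2) (t : ZMod 2) :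
    DegreeLeTwo (fun x => f x + (l x + t)) ↔ DegreeLeTwo f := by
  have h : ∀ a b c x, deriv3 (fun x => f x + (l x + t)) a b c x = deriv3 f a b c x := by
    intro a b c x
    simp only [deriv3, map_add]
    ring_nf
    reduce_mod_char
  simp only [DegreeLeTwo, h]

lemma DegreeLeTwo.comp_affine {f : G → ZMod 2} (hf : DegreeLeTwo f) (e : G →+ G) (t : G) :
    DegreeLeTwo fun x => f (e x + t) := by
  intro a b c x
  convert hf (e a) (e b) (e c) (e x + t) using 1
  simp only [deriv3, map_add, add_right_comm _ t]

lemma degreeLeTwo_comp_affine_iff {f : G → ZMod 2} (e : G ≃+ G) (t : G) :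
    DegreeLeTwo (fun x => f (e x + t)) ↔ DegreeLeTwo f := by
  refine ⟨fun h => ?_, fun h => h.comp_affine e t⟩
  convert h.comp_affine e.symm (-e.symm t) using 2 with y
  simp

end ThirdDerivative

lemma exists_fiber_subset_pair {G H : Type*} [AddCommGroup G] [AddCommGroup H] (ρ : G →+ H)
    {e : G} (hρ : ∀ z, ρ z = 0 → z = 0 ∨ z = e) (s : H) :
    ∃ z₀, ∀ z, ρ z = s → z = z₀ ∨ z = z₀ + e := by
  by_cases h : ∃ z₀, ρ z₀ = s
  · obtain ⟨z₀, hz₀⟩ := h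
    refine ⟨z₀, fun z hz => ?_⟩
    rcases hρ (z - z₀) (by rw [map_sub, hz, hz₀, sub_self]) with h | h
    · exact Or.inl (sub_eq_zero.mp h)
    · exact Or.inr (by rw [← h, add_sub_cancel])
  · exact ⟨0, fun z hz => absurd ⟨z, hz⟩ h⟩

section FiniteField

variable {m : ℕ}

local notation "𝔽" => GaloisField 2 m
local notation "ι" => algebraMap (ZMod 2) (GaloisField 2 m)

lemma card_galoisField (hm : m ≠ 0) : Fintype.card 𝔽 = 2 ^ m := by
  rw [← Nat.card_eq_fintype_card, GaloisField.card 2 m hm]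

@[simp] lemma tr_add (x y : 𝔽) : tr m (x + y) = tr m x + tr m y := map_add _ x y

@[simp] lemma tr_zero : tr m (0 : 𝔽) = 0 := map_zero _

lemma tr_algebraMap_mul (t : ZMod 2) (z : 𝔽) : tr m (ι t * z) = t * tr m z := by
  rw [tr, ← Algebra.smul_def, map_smul, smul_eq_mul, tr]

lemma tr_pow_two_pow (k : ℕ) (z : 𝔽) : tr m (z ^ 2 ^ k) = tr m z := by
  induction k with
  | zero => simp
  | succ k ih =>
    rw [pow_succ, pow_mul, ← ih]
    have := Algebra.trace_eq_of_algEquiv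
      (FiniteField.frobeniusAlgEquivOfAlgebraic (ZMod 2) 𝔽) (z ^ 2 ^ k)
    simpa [tr, ZMod.card] using this

lemma tr_pow_two_pow_add_self (k : ℕ) (z : 𝔽) : tr m (z ^ 2 ^ k + z) = 0 := by
  rw [tr_add, tr_pow_two_pow, CharTwo.add_self_eq_zero]

lemma exists_tr_mul_eq_one {c : 𝔽} (hc : c ≠ 0) : ∃ x, tr m (c * x) = 1 := by
  obtain ⟨y, hy⟩ := Algebra.trace_surjective (ZMod 2) 𝔽 1
  exact ⟨c⁻¹ * y, by rw [mul_inv_cancel_left₀ hc]; exact hy⟩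

lemma eq_of_forall_tr_mul_eq {γ γ' : 𝔽} (h : ∀ y, tr m (γ * y) = tr m (γ' * y)) : γ = γ' := by
  by_contra hne
  obtain ⟨y, hy⟩ := exists_tr_mul_eq_one (sub_ne_zero.mpr hne)
  rw [sub_mul, CharTwo.sub_eq_add, tr_add, h, CharTwo.add_self_eq_zero] at hy
  exact zero_ne_one hy

lemma exists_tr_mul_map_eq (L : 𝔽 →ₗ[ZMod 2] 𝔽) (β : 𝔽) :
    ∃ γ, ∀ y, tr m (β * L y) = tr m (γ * y) := by
  have hB := traceForm_nondegenerate (ZMod 2) 𝔽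
  let φ := Algebra.trace (ZMod 2) 𝔽 ∘ₗ LinearMap.mulLeft (ZMod 2) β ∘ₗ L
  refine ⟨(LinearMap.BilinForm.toDual _ hB).symm φ, fun y => ?_⟩
  exact (LinearMap.BilinForm.apply_toDual_symm_apply (hB := hB) φ y).symm

open scoped Classical in
lemma sum_sgn_tr_mul (hm : m ≠ 0) (c : 𝔽) :
    ∑ x, sgn (tr m (c * x)) = if c = 0 then 2 ^ m else 0 := by
  split_ifs with hc
  · simp [hc, card_galoisField hm]
  · obtain ⟨x₀, hx₀⟩ := exists_tr_mul_eq_one hc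
    exact sum_sgn_eq_zero
      ((Algebra.trace (ZMod 2) 𝔽).toAddMonoidHom.comp (AddMonoidHom.mulLeft c)) hx₀

open scoped Classical in
lemma sum_sgn_tr_mul_pow_two_pow (hm : m ≠ 0) (k : ℕ) (c : 𝔽) :
    ∑ x, sgn (tr m (c * x ^ 2 ^ k)) = if c = 0 then 2 ^ m else 0 := by
  rw [← sum_sgn_tr_mul hm]
  exact Fintype.sum_equiv (iterateFrobeniusEquiv 𝔽 2 k).toEquiv _ _ fun _ => rfl

lemma walsh_eq_sum (F : 𝔽 → 𝔽) (a b : 𝔽) :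
    walsh m F a b = ∑ x, sgn (tr m (b * F x) + tr m (a * x)) :=
  finsum_eq_sum_of_fintype _

lemma walsh_zero_right (hm : m ≠ 0) (F : 𝔽 → 𝔽) {a : 𝔽} (ha : a ≠ 0) : walsh m F a 0 = 0 := by
  simpa [walsh_eq_sum, ha] using sum_sgn_tr_mul hm a

lemma pow_two_pow_mul_eq_self (hm : m ≠ 0) (n : ℕ) (z : 𝔽) : z ^ 2 ^ (m * n) = z := by
  rw [pow_mul, ← card_galoisField hm, FiniteField.pow_card_pow]

lemma pow_two_pow_pow_two_pow_of_dvd (hm : m ≠ 0) {i k : ℕ} (hik : m ∣ i + k) (z : 𝔽) :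
    (z ^ 2 ^ i) ^ 2 ^ k = z := by
  obtain ⟨n, hn⟩ := hik
  rw [← pow_mul, ← pow_add, hn, pow_two_pow_mul_eq_self hm]

lemma eq_zero_or_one_of_pow_two_pow_eq_self (hm : m ≠ 0) {k : ℕ} (hk : Nat.Coprime k m)
    {z : 𝔽} (hz : z ^ 2 ^ k = z) : z = 0 ∨ z = 1 := by
  have hper : ∀ n, Function.IsPeriodicPt (· ^ 2) n z ↔ z ^ 2 ^ n = z := fun n => by
    rw [Function.IsPeriodicPt, Function.IsFixedPt, pow_iterate]
  have h := ((hper k).2 hz).gcd ((hper m).2 (by simpa using pow_two_pow_mul_eq_self hm 1 z))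
  rw [hk, hper, pow_one] at h
  exact IsIdempotentElem.iff_eq_zero_or_one.mp (by rwa [IsIdempotentElem, ← sq])

end FiniteField

def IsAlmostBentValue (m : ℕ) (w : ℤ) : Prop :=
  w = 0 ∨ w = 2 ^ ((m + 1) / 2) ∨ w = -(2 ^ ((m + 1) / 2))

lemma isAlmostBentValue_of_mul_self {m : ℕ} (hodd : Odd m) {w : ℤ}
    (hw : w * w = 0 ∨ w * w = 2 ^ (m + 1)) : IsAlmostBentValue m w := by
  rcases hw with h | h
  · exact Or.inl (mul_self_eq_zero.mp h)
  · obtain ⟨t, rfl⟩ := hodd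
    have ht : (2 * t + 1 + 1) / 2 = t + 1 := by omega
    rw [IsAlmostBentValue, ht]
    refine Or.inr (mul_self_eq_mul_self_iff.mp ?_)
    rw [h, ← pow_add]
    ring_nf

section Gold

variable {m i : ℕ}

local notation "𝔽" => GaloisField 2 m

lemma pow_two_pow_sub_one_injective (hm : m ≠ 0) {k : ℕ} (hk0 : k ≠ 0) (hk : Nat.Coprime k m) :
    Function.Injective fun z : 𝔽 => z ^ (2 ^ k - 1) := by
  have hN : 2 ^ k - 1 ≠ 0 := by have := Nat.one_lt_two_pow hk0; omega
  intro u v huv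
  simp only at huv
  by_cases hv : v = 0
  · rw [hv, zero_pow hN, pow_eq_zero_iff hN] at huv
    rw [huv, hv]
  have hw : (u / v) ^ 2 ^ k = u / v := by
    rw [← Nat.sub_add_cancel (Nat.one_le_two_pow (n := k)), pow_succ, div_pow, huv,
      div_self (pow_ne_zero _ hv), one_mul]
  rcases eq_zero_or_one_of_pow_two_pow_eq_self hm hk hw with h | h
  · rw [div_eq_zero_iff, or_iff_left hv] at h
    rw [h, zero_pow hN, eq_comm, pow_eq_zero_iff hN] at huv
    exact absurd huv hv
  · exact (div_eq_one_iff_eq hv).mp h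

lemma tr_gold_add (a b x u : 𝔽) :
    tr m (b * (x + u) ^ (2 ^ i + 1) + a * (x + u)) =
      tr m (b * x ^ (2 ^ i + 1) + a * x) +
        tr m ((b * u + b ^ 2 ^ i * u ^ 2 ^ (2 * i)) * x ^ 2 ^ i) +
        tr m (b * u ^ (2 ^ i + 1) + a * u) := by
  have hfrob : tr m (b * u ^ 2 ^ i * x) = tr m (b ^ 2 ^ i * u ^ 2 ^ (2 * i) * x ^ 2 ^ i) := by
    rw [← tr_pow_two_pow i, mul_pow, mul_pow, ← pow_mul, ← pow_add, two_mul]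
  have hexp : b * (x + u) ^ (2 ^ i + 1) + a * (x + u) =
      (b * x ^ (2 ^ i + 1) + a * x) + b * u * x ^ 2 ^ i + b * u ^ 2 ^ i * x +
        (b * u ^ (2 ^ i + 1) + a * u) := by
    rw [pow_succ, add_pow_char_pow, pow_succ, pow_succ]
    ring
  rw [hexp, add_mul]
  simp only [tr_add, hfrob]
  ring

lemma exists_gold_kernel_eq_pair (hm : m ≠ 0) (hi0 : i ≠ 0) (hi : Nat.Coprime (2 * i) m) {b : 𝔽}
    (hb : b ≠ 0) : ∃ u₀ ≠ 0, ∀ u, b * u + b ^ 2 ^ i * u ^ 2 ^ (2 * i) = 0 ↔ u = 0 ∨ u = u₀ := by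
  set N := 2 ^ (2 * i) - 1
  have hN : 2 ^ (2 * i) = N + 1 := (Nat.sub_add_cancel Nat.one_le_two_pow).symm
  have hN0 : N ≠ 0 := by have := Nat.one_lt_two_pow (n := 2 * i) (by omega); omega
  have hinj := pow_two_pow_sub_one_injective hm (by omega) hi
  obtain ⟨u₀, hu₀⟩ := Finite.injective_iff_surjective.mp hinj (b / b ^ 2 ^ i)
  have hbi : b ^ 2 ^ i ≠ 0 := pow_ne_zero _ hb
  have hker : ∀ u ≠ (0 : 𝔽), b * u + b ^ 2 ^ i * u ^ 2 ^ (2 * i) = 0 ↔ u ^ N = b / b ^ 2 ^ i := by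
    intro u hu
    rw [CharTwo.add_eq_zero, hN, pow_succ, eq_div_iff hbi, ← mul_assoc, mul_comm _ (u ^ N),
      mul_left_inj' hu, eq_comm]
  refine ⟨u₀, fun h => ?_, fun u => ?_⟩
  · simp only at hu₀
    rw [h, zero_pow hN0, eq_comm, div_eq_zero_iff] at hu₀
    exact hu₀.elim hb hbi
  · by_cases hu : u = 0
    · simp [hu]
    · rw [hker u hu, ← hu₀, hinj.eq_iff]
      simp [hu]

theorem isAlmostBentValue_walsh_gold (hi0 : i ≠ 0) (hi : Nat.Coprime (2 * i) m) (a : 𝔽)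
    {b : 𝔽} (hb : b ≠ 0) : IsAlmostBentValue m (walsh m (· ^ (2 ^ i + 1)) a b) := by
  classical
  have hm : m ≠ 0 := by rintro rfl; simp at hi
  have hodd : Odd m := Nat.coprime_two_left.mp (Nat.Coprime.coprime_mul_right hi)
  set f : 𝔽 → ZMod 2 := fun x => tr m (b * x ^ (2 ^ i + 1) + a * x)
  obtain ⟨u₀, hu₀, hker⟩ := exists_gold_kernel_eq_pair hm hi0 hi hb
  have hinner : ∀ u, ∑ x, sgn (f (x + u) + f x) =
      (if u = 0 ∨ u = u₀ then 2 ^ m else 0) * sgn (f u) := by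
    intro u
    have hder : ∀ x, f (x + u) + f x =
        tr m ((b * u + b ^ 2 ^ i * u ^ 2 ^ (2 * i)) * x ^ 2 ^ i) + f u := by
      intro x
      simp only [f, tr_gold_add]
      ring_nf
      reduce_mod_char
    simp only [hder, sgn_add, ← Finset.sum_mul, sum_sgn_tr_mul_pow_two_pow hm, hker]
  have hf0 : f 0 = 0 := by simp [f]
  have hsq : (∑ x, sgn (f x)) * ∑ x, sgn (f x) = 2 ^ m * (1 + sgn (f u₀)) := by
    simp only [sum_sgn_mul_self, hinner, ite_mul, zero_mul]
    rw [← Finset.sum_filter,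
      show univ.filter (fun u => u = 0 ∨ u = u₀) = {0, u₀} by ext; simp,
      Finset.sum_pair hu₀.symm, hf0, sgn_zero]
    ring
  have hW : walsh m (· ^ (2 ^ i + 1)) a b = ∑ x, sgn (f x) := by
    simp only [walsh_eq_sum, f, tr_add]
  rw [hW]
  apply isAlmostBentValue_of_mul_self hodd
  rcases sgn_eq_one_or_neg_one (f u₀) with h | h <;> rw [hsq, h]
  · exact Or.inr (by ring)
  · exact Or.inl (by ring)

end Gold

section Twist

variable {m i : ℕ}

local notation "𝔽" => GaloisField 2 m
local notation "ι" => algebraMap (ZMod 2) (GaloisField 2 m)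

variable (m i) in
noncomputable def quadTr (x : 𝔽) : ZMod 2 := tr m (x ^ (2 ^ i + 1) + x)

variable (m i) in
/-- With `a = 1`, the CCZ involution `L` maps the point `(x, F'(x))` of the graph of `F'` to
`(twist x, (twist x)^{2^i+1})`. -/
noncomputable def twist (x : 𝔽) : 𝔽 := x + ι (quadTr m i x)

lemma quadTr_add_one (x : 𝔽) : quadTr m i (x + 1) = quadTr m i x := by
  have h : (x + 1) ^ (2 ^ i + 1) + (x + 1) = (x ^ (2 ^ i + 1) + x) + (x ^ 2 ^ i + x) := by
    rw [pow_succ, add_pow_char_pow, one_pow, pow_succ]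
    linear_combination CharTwo.two_eq_zero (R := 𝔽)
  rw [quadTr, h, tr_add, tr_pow_two_pow_add_self, add_zero, quadTr]

lemma quadTr_add_algebraMap (x : 𝔽) (t : ZMod 2) : quadTr m i (x + ι t) = quadTr m i x := by
  rcases zmod_two_eq_zero_or_one t with rfl | rfl
  · rw [map_zero, add_zero]
  · rw [map_one, quadTr_add_one]

lemma quadTr_twist (x : 𝔽) : quadTr m i (twist m i x) = quadTr m i x :=
  quadTr_add_algebraMap x _

lemma twist_involutive : Function.Involutive (twist m i) := by
  intro x
  rw [twist, quadTr_twist, twist, add_assoc, CharTwo.add_self_eq_zero, add_zero]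

lemma Fab_twist (x : 𝔽) : Fab m i (twist m i x) = x ^ (2 ^ i + 1) + ι (quadTr m i x) := by
  have h := quadTr_twist (i := i) x
  rw [quadTr] at h
  rw [Fab, h, twist]
  rcases zmod_two_eq_zero_or_one (quadTr m i x) with h | h <;> rw [h]
  · simp
  · rw [map_one, mul_one, pow_succ, add_pow_char_pow, one_pow, pow_succ]
    linear_combination (x ^ 2 ^ i + x + 1) * CharTwo.two_eq_zero (R := 𝔽)

lemma walsh_Fab (a b : 𝔽) :
    walsh m (Fab m i) a b =
      walsh m (· ^ (2 ^ i + 1)) (a + ι (tr m (a + b))) (b + ι (tr m (a + b))) := by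
  rw [walsh_eq_sum, walsh_eq_sum, ← Equiv.sum_comp (twist_involutive.toPerm (twist m i))]
  refine Finset.sum_congr rfl fun x _ => congrArg sgn ?_
  rw [Function.Involutive.coe_toPerm, Fab_twist]
  simp only [twist, mul_add, add_mul, tr_add, mul_comm _ (ι _), tr_algebraMap_mul]
  rw [quadTr, tr_add]
  ring

theorem isAlmostBentValue_walsh_Fab (hi0 : i ≠ 0) (hi : Nat.Coprime (2 * i) m) (a : 𝔽)
    {b : 𝔽} (hb : b ≠ 0) : IsAlmostBentValue m (walsh m (Fab m i) a b) := by
  have hm : m ≠ 0 := by rintro rfl; simp at hi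
  rw [walsh_Fab]
  set ε := ι (tr m (a + b)) with hε
  by_cases hbε : b + ε = 0
  · have haε : a + ε ≠ 0 := by
      intro haε
      rw [CharTwo.add_eq_zero] at hbε haε
      have hab : a + b = 0 := by rw [haε, hbε, CharTwo.add_self_eq_zero]
      rw [hbε, hε, hab, tr_zero, map_zero] at hb
      exact hb rfl
    rw [hbε, walsh_zero_right hm _ haε]
    exact Or.inl rfl
  · exact isAlmostBentValue_walsh_gold hi0 hi _ hbε

end Twist

section Components

variable {m i k : ℕ}

local notation "𝔽" => GaloisField 2 m
local notation "ι" => algebraMap (ZMod 2) (GaloisField 2 m)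

variable (m i) in
noncomputable def quadTrPolar (u v : 𝔽) : ZMod 2 := tr m (u ^ 2 ^ i * v + u * v ^ 2 ^ i)

lemma quadTr_add (u v : 𝔽) :
    quadTr m i (u + v) = quadTr m i u + quadTrPolar m i u v + quadTr m i v := by
  simp only [quadTr, quadTrPolar, ← tr_add]
  rw [pow_succ, pow_succ, pow_succ, add_pow_char_pow]
  ring_nf

lemma quadTrPolar_add_left (u v w : 𝔽) :
    quadTrPolar m i (u + v) w = quadTrPolar m i u w + quadTrPolar m i v w := by
  simp only [quadTrPolar, ← tr_add, add_pow_char_pow]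
  ring_nf

lemma tr_mul_Fab (β x : 𝔽) :
    tr m (β * Fab m i x) =
      tr m (β * x ^ (2 ^ i + 1)) + tr m (β * (x ^ 2 ^ i + x)) * quadTr m i x := by
  rw [Fab, mul_add, tr_add, ← mul_assoc, mul_comm (β * _), tr_algebraMap_mul, quadTr]
  ring

lemma degreeLeTwo_tr_mul_gold (β : 𝔽) : DegreeLeTwo fun x => tr m (β * x ^ (2 ^ i + 1)) :=
  degreeLeTwo_of_quadratic (fun u v => tr m (β * (u ^ 2 ^ i * v + u * v ^ 2 ^ i)))
    (fun u v => by simp only [← tr_add, pow_succ, add_pow_char_pow]; ring_nf)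
    (fun u v w => by simp only [← tr_add, add_pow_char_pow]; ring_nf)

lemma degreeLeTwo_tr_Fab : DegreeLeTwo fun x => tr m (Fab m i x) := by
  have h : (fun x => tr m (Fab m i x)) = fun x => tr m (1 * x ^ (2 ^ i + 1)) := by
    funext x
    rw [← one_mul (Fab m i x), tr_mul_Fab, one_mul (_ + _), tr_pow_two_pow_add_self, zero_mul,
      add_zero]
  rw [h]
  exact degreeLeTwo_tr_mul_gold 1

lemma tr_pow_two_pow_mul_eq (hm : m ≠ 0) (hik : m ∣ i + k) (u v : 𝔽) :
    tr m (u ^ 2 ^ i * v) = tr m (u * v ^ 2 ^ k) := by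
  rw [← tr_pow_two_pow k, mul_pow, pow_two_pow_pow_two_pow_of_dvd hm hik]

lemma quadTrPolar_eq (hm : m ≠ 0) (hik : m ∣ i + k) (u v : 𝔽) :
    quadTrPolar m i u v = tr m (u * (v ^ 2 ^ k + v ^ 2 ^ i)) := by
  rw [quadTrPolar, tr_add, tr_pow_two_pow_mul_eq hm hik, ← tr_add, mul_add]

lemma tr_mul_pow_two_pow_add_self (hm : m ≠ 0) (hik : m ∣ i + k) (β z : 𝔽) :
    tr m (β * (z ^ 2 ^ i + z)) = tr m ((β ^ 2 ^ k + β) * z) := by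
  rw [mul_add, tr_add, mul_comm, tr_pow_two_pow_mul_eq hm hik, ← tr_add]
  ring_nf

lemma deriv3_tr_mul_Fab (hm : m ≠ 0) (hik : m ∣ i + k) (β a b c x : 𝔽) :
    deriv3 (fun z => tr m (β * Fab m i z)) a b c x =
      tr m ((β ^ 2 ^ k + β) * a) * quadTrPolar m i b c +
        tr m ((β ^ 2 ^ k + β) * b) * quadTrPolar m i a c +
        tr m ((β ^ 2 ^ k + β) * c) * quadTrPolar m i a b := by
  have hsplit : (fun z => tr m (β * Fab m i z)) =
      fun z => tr m (β * z ^ (2 ^ i + 1)) + tr m (β * (z ^ 2 ^ i + z)) * quadTr m i z := by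
    funext z; exact tr_mul_Fab β z
  have hlin : ∀ u v : 𝔽, tr m (β * ((u + v) ^ 2 ^ i + (u + v))) =
      tr m (β * (u ^ 2 ^ i + u)) + tr m (β * (v ^ 2 ^ i + v)) := by
    intro u v
    rw [← tr_add, add_pow_char_pow]
    ring_nf
  rw [hsplit, deriv3_add, degreeLeTwo_tr_mul_gold β a b c x, zero_add,
    deriv3_mul_of_quadratic _ _ _ hlin quadTr_add quadTrPolar_add_left]
  simp only [tr_mul_pow_two_pow_add_self hm hik]

lemma two_mul_card_filter_tr_mul_eq_zero (hm : m ≠ 0) {s : 𝔽} (hs : s ≠ 0) :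
    2 * #{x | tr m (s * x) = 0} = 2 ^ m := by
  classical
  have hsum := sum_sgn_tr_mul hm s
  have hpt : ∀ x : 𝔽, sgn (tr m (s * x)) = 2 * (if tr m (s * x) = 0 then 1 else 0) - 1 := by
    intro x
    rcases zmod_two_eq_zero_or_one (tr m (s * x)) with h | h <;> simp [h]
  rw [if_neg hs, Finset.sum_congr rfl fun x _ => hpt x, Finset.sum_sub_distrib, ← Finset.mul_sum,
    Finset.sum_boole, Finset.sum_const, card_univ, card_galoisField hm] at hsum
  have : (2 : ℤ) * #{x | tr m (s * x) = 0} = 2 ^ m := by simpa [sub_eq_zero] using hsum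
  exact_mod_cast this

lemma eq_zero_or_one_of_pow_two_pow_add_eq_zero (hm : m ≠ 0) (hik : m ∣ i + k)
    (hi : Nat.Coprime (2 * i) m) {z : 𝔽} (hz : z ^ 2 ^ k + z ^ 2 ^ i = 0) : z = 0 ∨ z = 1 := by
  refine eq_zero_or_one_of_pow_two_pow_eq_self hm hi ?_
  have := congrArg (· ^ 2 ^ i) (CharTwo.add_eq_zero.mp hz)
  simp only [pow_two_pow_pow_two_pow_of_dvd hm (add_comm i k ▸ hik), ← pow_mul, ← pow_add,
    ← two_mul] at this
  exact this.symm

/-- `c ↦ c^{2^k} + c^{2^i}` is two-to-one, so at most four points are sent into `{0, s}`, while the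
hyperplane `tr (s c) = 0` has `2^{m-1} ≥ 8` points. -/
lemma exists_mem_ker_tr_mul (hm : 4 ≤ m) (hik : m ∣ i + k) (hi : Nat.Coprime (2 * i) m)
    {s : 𝔽} (hs : s ≠ 0) :
    ∃ c, tr m (s * c) = 0 ∧ c ^ 2 ^ k + c ^ 2 ^ i ≠ 0 ∧ c ^ 2 ^ k + c ^ 2 ^ i ≠ s := by
  classical
  have hm0 : m ≠ 0 := by omega
  let ρ : 𝔽 →+ 𝔽 :=
    (iterateFrobenius 𝔽 2 k).toAddMonoidHom + (iterateFrobenius 𝔽 2 i).toAddMonoidHom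
  have hρ : ∀ z, ρ z = z ^ 2 ^ k + z ^ 2 ^ i := fun _ => rfl
  have hker : ∀ z, ρ z = 0 → z = 0 ∨ z = 1 := fun z hz =>
    eq_zero_or_one_of_pow_two_pow_add_eq_zero hm0 hik hi (hρ z ▸ hz)
  obtain ⟨z₀, hz₀⟩ := exists_fiber_subset_pair ρ hker s
  have hcard : #({0, 1, z₀, z₀ + 1} : Finset 𝔽) < #{x | tr m (s * x) = 0} := by
    have h16 : 16 ≤ 2 ^ m := le_trans (by norm_num) (Nat.pow_le_pow_right two_pos hm)
    have := two_mul_card_filter_tr_mul_eq_zero hm0 hs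
    have := Finset.card_le_four (a := (0 : 𝔽)) (b := 1) (c := z₀) (d := z₀ + 1)
    omega
  obtain ⟨c, hc, hc'⟩ := Finset.exists_mem_notMem_of_card_lt_card hcard
  refine ⟨c, (Finset.mem_filter.mp hc).2, fun h => hc' ?_, fun h => hc' ?_⟩
  · rcases hker c ((hρ c).trans h) with rfl | rfl <;> simp
  · rcases hz₀ c ((hρ c).trans h) with rfl | rfl <;> simp

theorem not_degreeLeTwo_tr_mul_Fab (hm : 4 ≤ m) (hik : m ∣ i + k) (hi : Nat.Coprime (2 * i) m)
    {β : 𝔽} (hβ0 : β ≠ 0) (hβ1 : β ≠ 1) : ¬ DegreeLeTwo fun x => tr m (β * Fab m i x) := by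
  have hm0 : m ≠ 0 := by omega
  set s := β ^ 2 ^ k + β
  have hs : s ≠ 0 := by
    intro h
    have := congrArg (· ^ 2 ^ i) (CharTwo.add_eq_zero.mp h)
    simp only [pow_two_pow_pow_two_pow_of_dvd hm0 (add_comm i k ▸ hik)] at this
    rcases eq_zero_or_one_of_pow_two_pow_eq_self hm0 (Nat.Coprime.coprime_mul_left hi) this.symm
      with h | h
    exacts [hβ0 h, hβ1 h]
  obtain ⟨c, hc, hρ0, hρs⟩ := exists_mem_ker_tr_mul hm hik hi hs
  set r := c ^ 2 ^ k + c ^ 2 ^ i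
  obtain ⟨b, hb⟩ := exists_tr_mul_eq_one hρ0
  -- the third derivative at `(a, b, c)` is `tr ((s + tr (s b) r) a)`
  have hsr : s + ι (tr m (s * b)) * r ≠ 0 := by
    rcases zmod_two_eq_zero_or_one (tr m (s * b)) with h | h <;> rw [h]
    · simpa using hs
    · rw [map_one, one_mul, Ne, CharTwo.add_eq_zero]
      exact fun h' => hρs h'.symm
  obtain ⟨a, ha⟩ := exists_tr_mul_eq_one hsr
  intro hdeg
  have h3 := hdeg a b c 0
  rw [deriv3_tr_mul_Fab hm0 hik, quadTrPolar_eq hm0 hik, quadTrPolar_eq hm0 hik, hc, mul_comm b,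
    hb, zero_mul, add_zero, mul_one] at h3
  rw [add_mul, tr_add, mul_assoc, tr_algebraMap_mul, mul_comm r a] at ha
  exact one_ne_zero (ha.symm.trans h3)

end Components

section EAEquivalence

variable {m : ℕ}

local notation "𝔽" => GaloisField 2 m

variable (m) in
def IsEAEquivalentToPower (F : 𝔽 → 𝔽) : Prop :=
  ∃ (d : ℕ) (A₁ A₂ : 𝔽 ≃ₗ[ZMod 2] 𝔽) (A : 𝔽 →ₗ[ZMod 2] 𝔽) (c₁ c₂ c₀ : 𝔽),
    ∀ x, F x = A₁ ((A₂ x + c₂) ^ d) + c₁ + A x + c₀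

lemma degreeLeTwo_tr_mul_iff_of_eq_pow_affine {F : 𝔽 → 𝔽} {d : ℕ} {A₁ A₂ : 𝔽 ≃ₗ[ZMod 2] 𝔽}
    {A : 𝔽 →ₗ[ZMod 2] 𝔽} {c₁ c₂ c₀ : 𝔽} (hF : ∀ x, F x = A₁ ((A₂ x + c₂) ^ d) + c₁ + A x + c₀)
    {β γ : 𝔽} (hβγ : ∀ y, tr m (β * A₁ y) = tr m (γ * y)) :
    (DegreeLeTwo fun x => tr m (β * F x)) ↔ DegreeLeTwo fun y => tr m (γ * y ^ d) := by
  let l : 𝔽 →+ ZMod 2 :=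
    (Algebra.trace (ZMod 2) 𝔽 ∘ₗ LinearMap.mulLeft (ZMod 2) β ∘ₗ A).toAddMonoidHom
  have h : (fun x => tr m (β * F x)) =
      fun x => tr m (γ * (A₂ x + c₂) ^ d) + (l x + tr m (β * (c₁ + c₀))) := by
    funext x
    rw [hF, ← hβγ]
    simp only [l, mul_add, tr_add]
    change _ = _ + (tr m (β * A x) + _)
    ring
  rw [h, degreeLeTwo_add_affine_iff]
  exact degreeLeTwo_comp_affine_iff (f := fun y => tr m (γ * y ^ d)) A₂.toAddEquiv c₂

lemma pow_eq_one_of_unique_degreeLeTwo_tr_mul (d : ℕ) {γ₁ : 𝔽} (hγ₁ : γ₁ ≠ 0)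
    (hquad : DegreeLeTwo fun y => tr m (γ₁ * y ^ d))
    (huniq : ∀ γ ≠ 0, (DegreeLeTwo fun y => tr m (γ * y ^ d)) → γ = γ₁) {w : 𝔽} (hw : w ≠ 0) :
    w ^ d = 1 := by
  have h : DegreeLeTwo fun y => tr m (γ₁ * w ^ d * y ^ d) := by
    simpa only [AddMonoidHom.coe_mulLeft, mul_pow, mul_assoc, add_zero] using
      hquad.comp_affine (AddMonoidHom.mulLeft w) 0
  exact (mul_eq_left₀ hγ₁).mp (huniq _ (mul_ne_zero hγ₁ (pow_ne_zero d hw)) h)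

lemma two_pow_half_add_two_lt (hm : 3 ≤ m) : (2 : ℤ) ^ ((m + 1) / 2) + 2 < 2 ^ m := by
  have h1 : (2 : ℤ) ^ ((m + 1) / 2) ≤ 2 ^ (m - 1) := pow_le_pow_right₀ (by norm_num) (by omega)
  have h2 : (4 : ℤ) ≤ 2 ^ (m - 1) := by
    calc (4 : ℤ) = 2 ^ 2 := by norm_num
      _ ≤ 2 ^ (m - 1) := pow_le_pow_right₀ (by norm_num) (by omega)
  have h3 : (2 : ℤ) ^ m = 2 * 2 ^ (m - 1) := by rw [← pow_succ']; congr 1; omega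
  linarith

lemma exists_not_isAlmostBentValue_of_eq_affine (hm : 3 ≤ m) {F : 𝔽 → 𝔽}
    (A : 𝔽 →ₗ[ZMod 2] 𝔽) (c x₀ : 𝔽) (hF : ∀ x ≠ x₀, F x = A x + c) :
    ∃ a, ¬ IsAlmostBentValue m (walsh m F a 1) := by
  classical
  obtain ⟨a, ha⟩ := exists_tr_mul_map_eq A 1
  refine ⟨a, ?_⟩
  have hconst : ∀ x ∈ univ.erase x₀, sgn (tr m (1 * F x) + tr m (a * x)) = sgn (tr m c) := by
    intro x hx
    rw [hF x (Finset.ne_of_mem_erase hx), mul_add, tr_add, ha, add_right_comm,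
      CharTwo.add_self_eq_zero, zero_add, one_mul]
  have hW : walsh m F a 1 =
      (2 ^ m - 1) * sgn (tr m c) + sgn (tr m (1 * F x₀) + tr m (a * x₀)) := by
    rw [walsh_eq_sum, ← Finset.sum_erase_add _ _ (mem_univ x₀), Finset.sum_congr rfl hconst,
      sum_const, card_erase_of_mem (mem_univ _), card_univ, card_galoisField (by omega),
      nsmul_eq_mul, Nat.cast_sub Nat.one_le_two_pow]
    push_cast
    ring
  have hlt := two_pow_half_add_two_lt hm
  have hpos : (0 : ℤ) < 2 ^ ((m + 1) / 2) := by positivity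
  rw [hW, IsAlmostBentValue]
  rcases sgn_eq_one_or_neg_one (tr m c) with h | h <;>
    rcases sgn_eq_one_or_neg_one (tr m (1 * F x₀) + tr m (a * x₀)) with h' | h' <;>
    rw [h, h'] <;> rintro (h'' | h'' | h'') <;> linarith

theorem not_isEAEquivalentToPower_Fab {i k : ℕ} (hm : 4 ≤ m) (hik : m ∣ i + k)
    (hi : Nat.Coprime (2 * i) m) (hAB : ∀ a, IsAlmostBentValue m (walsh m (Fab m i) a 1)) :
    ¬ IsEAEquivalentToPower m (Fab m i) := by
  rintro ⟨d, A₁, A₂, A, c₁, c₂, c₀, hEA⟩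
  obtain ⟨γ₁, hγ₁⟩ := exists_tr_mul_map_eq A₁.toLinearMap 1
  have hγ₁0 : γ₁ ≠ 0 := by
    rintro rfl
    obtain ⟨x, hx⟩ := exists_tr_mul_eq_one (one_ne_zero (α := 𝔽))
    have := hγ₁ (A₁.symm x)
    rw [LinearEquiv.coe_coe, LinearEquiv.apply_symm_apply, hx, zero_mul, tr_zero] at this
    exact one_ne_zero this
  have hquad := (degreeLeTwo_tr_mul_iff_of_eq_pow_affine hEA hγ₁).mp
    (by simpa only [one_mul] using degreeLeTwo_tr_Fab)
  have huniq : ∀ γ ≠ 0, (DegreeLeTwo fun y => tr m (γ * y ^ d)) → γ = γ₁ := by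
    intro γ hγ hdeg
    obtain ⟨β, hβ⟩ := exists_tr_mul_map_eq A₁.symm.toLinearMap γ
    have hβγ : ∀ y, tr m (β * A₁ y) = tr m (γ * y) := fun y => by
      simpa using (hβ (A₁ y)).symm
    by_cases hβ0 : β = 0
    · exact absurd (eq_of_forall_tr_mul_eq fun y => by rw [← hβγ, hβ0, zero_mul, zero_mul]) hγ
    by_cases hβ1 : β = 1
    · exact eq_of_forall_tr_mul_eq fun y => by rw [← hβγ, ← hγ₁, hβ1, LinearEquiv.coe_coe]
    exact absurd ((degreeLeTwo_tr_mul_iff_of_eq_pow_affine hEA hβγ).mpr hdeg)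
      (not_degreeLeTwo_tr_mul_Fab hm hik hi hβ0 hβ1)
  have hoff : ∀ x ≠ A₂.symm (-c₂), Fab m i x = A x + (A₁ 1 + c₁ + c₀) := by
    intro x hx
    have hne : A₂ x + c₂ ≠ 0 := fun h => hx (by rw [← eq_neg_iff_add_eq_zero.mpr h,
      LinearEquiv.symm_apply_apply])
    rw [hEA, pow_eq_one_of_unique_degreeLeTwo_tr_mul d hγ₁0 hquad huniq hne]
    ring
  obtain ⟨a, ha⟩ := exists_not_isAlmostBentValue_of_eq_affine (by omega) A _ _ hoff
  exact ha (hAB a)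

end EAEquivalence

end GoldCCZ

open GoldCCZ

/-- For `m > 3` odd, `gcd(i,m) = 1`, the function
`F'(x) = x^{2^i+1} + (x^{2^i}+x)·tr(x^{2^i+1}+x)` is almost bent (all Walsh
values for `b ≠ 0` lie in `{0, ±2^{(m+1)/2}}`) and is EA-inequivalent to every
power function. -/
theorem stmt_16 (m i : ℕ) (hm : 3 < m) (hmodd : Odd m) (hi : Nat.gcd i m = 1) :
    (∀ a b : GaloisField 2 m, b ≠ 0 →
      walsh m (Fab m i) a b = 0 ∨ walsh m (Fab m i) a b = 2 ^ ((m + 1) / 2) ∨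
        walsh m (Fab m i) a b = -(2 ^ ((m + 1) / 2))) ∧
    ¬ ∃ (d : ℕ) (A₁ A₂ : GaloisField 2 m ≃ₗ[ZMod 2] GaloisField 2 m)
        (A : GaloisField 2 m →ₗ[ZMod 2] GaloisField 2 m)
        (c₁ c₂ c₀ : GaloisField 2 m),
        ∀ x, Fab m i x = A₁ ((A₂ x + c₂) ^ d) + c₁ + A x + c₀ := by
  have hi0 : i ≠ 0 := by rintro rfl; rw [Nat.gcd_zero_left] at hi; omega
  have hi2 : Nat.Coprime (2 * i) m := Nat.Coprime.mul_left (Nat.coprime_two_left.mpr hmodd) hi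
  have hAB a b (hb : b ≠ 0) := isAlmostBentValue_walsh_Fab hi0 hi2 a hb
  have hik : m ∣ i + (m - 1) * i :=
    ⟨i, by rw [add_comm, ← Nat.succ_mul, Nat.succ_eq_add_one, Nat.sub_add_cancel (by omega)]⟩
  exact ⟨hAB, not_isEAEquivalentToPower_Fab (by omega) hik hi2 fun a => hAB a 1 one_ne_zero⟩
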